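/- arXiv:1509.06150 — 4 statements merged into one kernel-verified Lean document; each statement's English description precedes it below -/
import Mathlib

section
/- Let W = (𝒫, n) be a well-defined Wilson loop diagram. Then there exists a matroid M on the ground set Fin n whose independent sets are exactly the sets S ⊆ Fin n such that |U| ≤ |Prop(U)| for every U ⊆ S; moreover the bases of this matroid are exactly the sets B ⊆ Fin n with |B| = |𝒫| and |U| ≤ |Prop(U)| for every U ⊆ B (in particular the matroid has rank |𝒫|). -/
open Matroid Set

/-- The support of a propagator: its two endpoints and their cyclic successors. -/
def Vp (n : ℕ) [NeZero n] (p : Fin n × Fin n) : Set (Fin n) :=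
  {p.1, p.1 + 1, p.2, p.2 + 1}

/-- The support of a set of propagators. -/
def VP (n : ℕ) [NeZero n] (P : Set (Fin n × Fin n)) : Set (Fin n) :=
  ⋃ p ∈ P, Vp n p

/-- `propsOf n Ps S` is `Prop(S)`: the propagators of `Ps` whose support meets `S`. -/
def propsOf (n : ℕ) [NeZero n] (Ps : Set (Fin n × Fin n)) (S : Set (Fin n)) :
    Set (Fin n × Fin n) :=
  {p ∈ Ps | (Vp n p ∩ S).Nonempty}

/-- A Wilson loop diagram `(Ps, n)` is well defined if `|V_P| ≥ |P| + 3`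
for every nonempty `P ⊆ Ps`. -/
def WellDefinedWLD (n : ℕ) [NeZero n] (Ps : Set (Fin n × Fin n)) : Prop :=
  ∀ P ⊆ Ps, P.Nonempty → P.ncard + 3 ≤ (VP n P).ncard

/-!
The map `S ↦ |Prop(S)|` is monotone and submodular, since `Prop(S ∪ T) = Prop(S) ∪ Prop(T)` and
`Prop(S ∩ T) ⊆ Prop(S) ∩ Prop(T)`. For any monotone submodular `f : Set α → ℕ` on a finite type,
the sets `S` with `|U| ≤ f U` for all `U ⊆ S` form a matroid (Edmonds–Rota): if `I` cannot be
augmented from `J`, every `e ∈ J \ I` is blocked by a tight subset of `I` (one with `f A = |A|`);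
tight subsets of `I` are closed under union, so they are all contained in one maximal tight set
`T`, and submodularity gives `f (T ∪ (J \ I)) ≤ |T|`, which independence of `J` turns into
`|J \ I| ≤ |I \ J|`.

Independent sets have at most `|𝒫|` elements because `Prop(S) ⊆ 𝒫`. Conversely,
well-definedness gives Hall's condition `|P| ≤ |V_P|` for the family `(V_p)_{p ∈ 𝒫}`, so there
are distinct `v_p ∈ V_p`, and `{v_p}` is independent of size `|𝒫|`; hence the bases are exactly
the independent sets of size `|𝒫|`.
-/

open Function

section Submodular

variable {α : Type*} {f : Set α → ℕ} {I J A B T : Set α} {e : α}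

def IsSubmodular (f : Set α → ℕ) : Prop :=
  ∀ S T, f (S ∪ T) + f (S ∩ T) ≤ f S + f T

def IsHallIndep (f : Set α → ℕ) (S : Set α) : Prop :=
  ∀ U ⊆ S, U.ncard ≤ f U

lemma isHallIndep_empty : IsHallIndep f ∅ := by
  intro U hU
  simp [subset_empty_iff.mp hU]

lemma IsHallIndep.subset (hJ : IsHallIndep f J) (hIJ : I ⊆ J) : IsHallIndep f I :=
  fun U hU => hJ U (hU.trans hIJ)

lemma IsHallIndep.tight_union [Finite α] (hsub : IsSubmodular f) (hI : IsHallIndep f I)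
    (hA : A ⊆ I) (hB : B ⊆ I) (hfA : f A = A.ncard) (hfB : f B = B.ncard) :
    f (A ∪ B) = (A ∪ B).ncard := by
  have := hsub A B
  have := ncard_union_add_ncard_inter A B
  have := hI _ (union_subset hA hB)
  have := hI (A ∩ B) (inter_subset_left.trans hA)
  omega

lemma IsHallIndep.subset_of_maximal_tight [Finite α] (hsub : IsSubmodular f) (hI : IsHallIndep f I)
    (hT : Maximal (fun A => A ⊆ I ∧ f A = A.ncard) T) (hA : A ⊆ I) (hfA : f A = A.ncard) :
    A ⊆ T :=
  subset_union_left.trans <| hT.2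
    ⟨union_subset hA hT.1.1, hI.tight_union hsub hA hT.1.1 hfA hT.1.2⟩ subset_union_right

lemma IsHallIndep.exists_tight_of_not_insert [Finite α] (hmono : Monotone f) (hI : IsHallIndep f I)
    (he : ¬ IsHallIndep f (insert e I)) :
    ∃ A ⊆ I, f A = A.ncard ∧ f (insert e A) = f A := by
  obtain ⟨U, hUI, hU⟩ : ∃ U ⊆ insert e I, f U < U.ncard := by
    simpa [IsHallIndep] using he
  have hAI : U \ {e} ⊆ I := sdiff_singleton_subset_iff.mpr hUI
  have heU : e ∈ U := by
    by_contra heU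
    exact (hI U (by rwa [sdiff_singleton_eq_self heU] at hAI)).not_gt hU
  have hUA : insert e (U \ {e}) = U := by rw [insert_sdiff_singleton, insert_eq_of_mem heU]
  have hcard : U.ncard = (U \ {e}).ncard + 1 := by
    rw [← ncard_insert_of_notMem (fun h => h.2 rfl), hUA]
  have := hI _ hAI
  have := hmono (sdiff_subset : U \ {e} ⊆ U)
  exact ⟨U \ {e}, hAI, by omega, by rw [hUA]; omega⟩

lemma IsSubmodular.insert_le_of_subset (hmono : Monotone f) (hsub : IsSubmodular f)
    (hAB : A ⊆ B) (h : f (insert e A) ≤ f A) : f (insert e B) ≤ f B := by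
  have := hsub B (insert e A)
  rw [union_insert, union_eq_self_of_subset_right hAB] at this
  have := hmono (subset_inter hAB (subset_insert e A))
  omega

lemma IsSubmodular.union_le_of_forall_insert_le [Finite α] (hmono : Monotone f)
    (hsub : IsSubmodular f) (D : Set α) (h : ∀ e ∈ D, f (insert e T) ≤ f T) : f (T ∪ D) ≤ f T := by
  induction D, toFinite D using Set.Finite.induction_on with
  | empty => simp
  | @insert a s _ _ ih =>
    rw [union_insert]
    exact (hsub.insert_le_of_subset hmono subset_union_left (h a (mem_insert a s))).trans
      (ih fun e he => h e (mem_insert_of_mem a he))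

lemma IsHallIndep.exists_insert_of_ncard_lt [Finite α] (hmono : Monotone f) (hsub : IsSubmodular f)
    (hI : IsHallIndep f I) (hJ : IsHallIndep f J) (hlt : I.ncard < J.ncard) :
    ∃ e ∈ J, e ∉ I ∧ IsHallIndep f (insert e I) := by
  by_contra! hcon
  have hblock : ∀ e ∈ J \ I, ∃ A ⊆ I, f A = A.ncard ∧ f (insert e A) = f A :=
    fun e he => hI.exists_tight_of_not_insert hmono (hcon e he.1 he.2)
  obtain ⟨e₀, he₀⟩ := sdiff_nonempty_of_ncard_lt_ncard hlt
  obtain ⟨A₀, hA₀I, hA₀, -⟩ := hblock e₀ he₀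
  obtain ⟨T, -, hT⟩ := Finite.exists_le_maximal
    (p := fun A => A ⊆ I ∧ f A = A.ncard) ⟨hA₀I, hA₀⟩
  have hTI : T ⊆ I := hT.1.1
  have hfT : f (T ∪ (J \ I)) ≤ T.ncard := by
    refine (hsub.union_le_of_forall_insert_le hmono _ fun e he => ?_).trans hT.1.2.le
    obtain ⟨A, hAI, hfA, hAe⟩ := hblock e he
    exact hsub.insert_le_of_subset hmono (hI.subset_of_maximal_tight hsub hT hAI hfA) hAe.le
  have hdisj : Disjoint (J ∩ T) (J \ I) :=
    disjoint_left.mpr fun x hx hx' => hx'.2 (hTI hx.2)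
  have hJT : (J ∩ T).ncard + (J \ I).ncard ≤ T.ncard := by
    rw [← ncard_union_eq hdisj]
    refine (hJ _ (union_subset inter_subset_left sdiff_subset)).trans ((hmono ?_).trans hfT)
    exact union_subset_union_left _ inter_subset_right
  have := ncard_inter_add_ncard_sdiff_eq_ncard T J
  have := ncard_le_ncard (sdiff_subset_sdiff_left hTI : T \ J ⊆ I \ J)
  have := (ncard_lt_ncard_iff_ncard_sdiff_lt_ncard_sdiff (s := I) (t := J)).mp hlt
  rw [inter_comm] at hJT
  omega

def Matroid.ofSubmodular [Finite α] (hmono : Monotone f) (hsub : IsSubmodular f) : Matroid α :=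
  (IndepMatroid.ofFinite finite_univ (IsHallIndep f) isHallIndep_empty
    (fun _ _ hJ hIJ => hJ.subset hIJ)
    (fun _ _ hI hJ hlt => hI.exists_insert_of_ncard_lt hmono hsub hJ hlt)
    (fun I _ => subset_univ I)).matroid

end Submodular

lemma Matroid.isBase_iff_indep_ncard_eq {α : Type*} {M : Matroid α} [M.RankFinite]
    {I B : Set α} {k : ℕ} (hle : ∀ J, M.Indep J → J.ncard ≤ k) (hI : M.Indep I)
    (hIk : I.ncard = k) : M.IsBase B ↔ M.Indep B ∧ B.ncard = k := by
  obtain ⟨B₀, hB₀, hIB₀⟩ := hI.exists_isBase_superset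
  have hB₀k : B₀.ncard = k :=
    le_antisymm (hle _ hB₀.indep) (hIk ▸ ncard_le_ncard hIB₀ hB₀.finite)
  refine ⟨fun hB => ⟨hB.indep, (hB.ncard_eq_ncard_of_isBase hB₀).trans hB₀k⟩, ?_⟩
  rintro ⟨hB, hBk⟩
  obtain ⟨B', hB', hBB'⟩ := hB.exists_isBase_superset
  rwa [eq_of_subset_of_ncard_le hBB' (by rw [hB'.ncard_eq_ncard_of_isBase hB₀, hB₀k, hBk])
    hB'.finite]

section WilsonLoop

variable {n : ℕ} [NeZero n] {Ps : Set (Fin n × Fin n)}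

lemma propsOf_subset (S : Set (Fin n)) : propsOf n Ps S ⊆ Ps := fun _ hp => hp.1

lemma propsOf_mono : Monotone (propsOf n Ps) :=
  fun _ _ hST _ hp => ⟨hp.1, hp.2.mono (inter_subset_inter_right _ hST)⟩

lemma propsOf_union (S T : Set (Fin n)) :
    propsOf n Ps (S ∪ T) = propsOf n Ps S ∪ propsOf n Ps T := by
  ext p
  simp only [propsOf, mem_ofPred_eq, mem_union, inter_union_distrib_left, union_nonempty]
  tauto

lemma monotone_ncard_propsOf : Monotone fun S => (propsOf n Ps S).ncard :=
  fun _ _ hST => ncard_le_ncard (propsOf_mono hST)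

lemma isSubmodular_ncard_propsOf : IsSubmodular fun S => (propsOf n Ps S).ncard := by
  intro S T
  have := ncard_union_add_ncard_inter (propsOf n Ps S) (propsOf n Ps T)
  have := ncard_le_ncard
    (subset_inter (propsOf_mono inter_subset_left) (propsOf_mono inter_subset_right) :
      propsOf n Ps (S ∩ T) ⊆ propsOf n Ps S ∩ propsOf n Ps T)
  simp only [propsOf_union]
  omega

lemma IsHallIndep.ncard_le_ncard_props {S : Set (Fin n)}
    (hS : IsHallIndep (fun U => (propsOf n Ps U).ncard) S) : S.ncard ≤ Ps.ncard :=
  (hS S subset_rfl).trans (ncard_le_ncard (propsOf_subset S))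

lemma WellDefinedWLD.ncard_le_ncard_VP (hW : WellDefinedWLD n Ps) {P : Set (Fin n × Fin n)}
    (hP : P ⊆ Ps) : P.ncard ≤ (VP n P).ncard := by
  obtain rfl | hne := P.eq_empty_or_nonempty
  · simp
  · exact (Nat.le_add_right _ 3).trans (hW P hP hne)

lemma exists_injective_mem_Vp (hHall : ∀ P ⊆ Ps, P.ncard ≤ (VP n P).ncard) :
    ∃ g : Ps → Fin n, Injective g ∧ ∀ p : Ps, g p ∈ Vp n p := by
  classical
  refine (Fintype.all_card_le_filter_rel_iff_exists_injective _).mp fun A => ?_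
  have hVP : VP n (Subtype.val '' (A : Set Ps)) =
      ↑({v | ∃ p ∈ A, v ∈ Vp n p} : Finset (Fin n)) := by
    ext v
    simp [VP]
  have := hHall _ (Subtype.coe_image_subset Ps A)
  rwa [hVP, ncard_coe_finset, ncard_image_of_injective _ Subtype.val_injective,
    ncard_coe_finset] at this

lemma isHallIndep_range_of_mem_Vp {g : Ps → Fin n} (hg : Injective g)
    (hgV : ∀ p : Ps, g p ∈ Vp n p) :
    IsHallIndep (fun U => (propsOf n Ps U).ncard) (range g) := by
  intro U hU
  have hUg : U ⊆ g '' (Subtype.val ⁻¹' propsOf n Ps U) := by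
    intro v hv
    obtain ⟨p, rfl⟩ := hU hv
    exact ⟨p, ⟨p.2, g p, hgV p, hv⟩, rfl⟩
  calc U.ncard ≤ (g '' (Subtype.val ⁻¹' propsOf n Ps U)).ncard := ncard_le_ncard hUg
    _ = (Subtype.val ⁻¹' propsOf n Ps U).ncard := ncard_image_of_injective _ hg
    _ = (propsOf n Ps U).ncard := ncard_preimage_of_injective_subset_range
          Subtype.val_injective (by simpa using propsOf_subset U)

end WilsonLoop

/-- For a well-defined Wilson loop diagram `W = (Ps, n)` there is a matroid
on `Fin n` whose independent sets are exactly the `S` with `|U| ≤ |Prop(U)|` for all `U ⊆ S`,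
and whose bases are exactly the such sets of size `|Ps|`. -/
theorem wilson_loop_matroid_exists (n : ℕ) [NeZero n] (Ps : Set (Fin n × Fin n))
    (hW : WellDefinedWLD n Ps) :
    ∃ M : Matroid (Fin n), M.E = Set.univ ∧
      (∀ S : Set (Fin n), M.Indep S ↔ ∀ U ⊆ S, U.ncard ≤ (propsOf n Ps U).ncard) ∧
      (∀ B : Set (Fin n),
        M.IsBase B ↔ B.ncard = Ps.ncard ∧ ∀ U ⊆ B, U.ncard ≤ (propsOf n Ps U).ncard) := by
  set M := Matroid.ofSubmodular monotone_ncard_propsOf (isSubmodular_ncard_propsOf (Ps := Ps))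
  obtain ⟨g, hg, hgV⟩ := exists_injective_mem_Vp fun _ => hW.ncard_le_ncard_VP
  have hbase : ∀ B, M.IsBase B ↔ M.Indep B ∧ B.ncard = Ps.ncard := fun B =>
    M.isBase_iff_indep_ncard_eq (fun _ => IsHallIndep.ncard_le_ncard_props)
      (isHallIndep_range_of_mem_Vp hg hgV)
      ((ncard_range_of_injective hg).trans (Nat.card_coe_set_eq Ps))
  exact ⟨M, rfl, fun _ => Iff.rfl, fun B => (hbase B).trans and_comm⟩
end

section
/- Let W = (𝒫, n) be a Wilson loop diagram and let S ⊆ Fin n satisfy |U| ≤ |Prop(U)| for every U ⊆ S. Then there exists a subset P ⊆ Prop(S) with |P| = |S| such that every U ⊆ S satisfies |U| ≤ |{p ∈ P : V_p ∩ U ≠ ∅}|; that is, S is a basis of the matroid M(W|P) of the subdiagram W|P = (P, n). -/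
/-!
Each vertex `x ∈ S` is covered by the propagators of `Prop({x})`, and `Prop(U)` is the union of
these sets over `x ∈ U`, so the hypothesis is exactly Hall's condition for this family. Hall's
marriage theorem then assigns to each `x ∈ S` its own propagator `f x` with `x ∈ V_{f x}`, and
`P = f(S)` works: every `U ⊆ S` meets the supports of the `|U|` distinct propagators `f(U)`.
-/

open Matroid Set

theorem Set.exists_injOn_mem_of_forall_ncard_le {α β : Type*} [Finite β] [Nonempty β]
    (s : Set α) (N : α → Set β) (h : ∀ U ⊆ s, U.ncard ≤ (⋃ a ∈ U, N a).ncard) :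
    ∃ f : α → β, InjOn f s ∧ ∀ a ∈ s, f a ∈ N a := by
  classical
  have hHall : ∀ A : Finset s, A.card ≤ (A.biUnion fun a => (toFinite (N a)).toFinset).card := by
    intro A
    calc A.card = (Subtype.val '' (A : Set s)).ncard := by
          rw [ncard_image_of_injective _ Subtype.val_injective, ncard_coe_finset]
      _ ≤ (⋃ a ∈ Subtype.val '' (A : Set s), N a).ncard := h _ (by simp)
      _ = _ := by rw [← ncard_coe_finset, Finset.coe_biUnion, biUnion_image]; simp
  obtain ⟨g, hg, hgN⟩ := (Finset.all_card_le_biUnion_card_iff_exists_injective _).mp hHall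
  refine ⟨fun a => if ha : a ∈ s then g ⟨a, ha⟩ else Classical.arbitrary β, ?_, ?_⟩
  · intro a ha b hb hab
    simp only [ha, hb, dite_true] at hab
    exact congrArg Subtype.val (hg hab)
  · intro a ha
    simpa [ha] using hgN ⟨a, ha⟩

section propsOf

variable {n : ℕ} [NeZero n] {Ps : Set (Fin n × Fin n)}

theorem mem_propsOf_singleton {x : Fin n} {p : Fin n × Fin n} :
    p ∈ propsOf n Ps {x} ↔ p ∈ Ps ∧ x ∈ Vp n p := by
  simp [propsOf]

theorem propsOf_mono_s6 {S T : Set (Fin n)} (h : S ⊆ T) : propsOf n Ps S ⊆ propsOf n Ps T :=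
  fun _ ⟨hp, hS⟩ => ⟨hp, hS.mono (inter_subset_inter_right _ h)⟩

theorem biUnion_propsOf_singleton (U : Set (Fin n)) :
    ⋃ x ∈ U, propsOf n Ps {x} = propsOf n Ps U := by
  ext p
  simp only [mem_iUnion, exists_prop, mem_propsOf_singleton]
  exact ⟨fun ⟨x, hx, hp, hxp⟩ => ⟨hp, x, hxp, hx⟩, fun ⟨hp, x, hxp, hx⟩ => ⟨x, hx, hp, hxp⟩⟩

end propsOf

/-- If `S` is independent in the Wilson loop diagram `(Ps, n)`
(every `U ⊆ S` has `|U| ≤ |Prop(U)|`), then there is a subset `P ⊆ Prop(S)` with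
`|P| = |S|` such that `S` is a basis of the subdiagram `W|P = (P, n)`. -/
theorem independent_set_is_basis_of_subdiagram (n : ℕ) [NeZero n]
    (Ps : Set (Fin n × Fin n)) (S : Set (Fin n))
    (hS : ∀ U ⊆ S, U.ncard ≤ (propsOf n Ps U).ncard) :
    ∃ P ⊆ propsOf n Ps S, P.ncard = S.ncard ∧
      ∀ U ⊆ S, U.ncard ≤ (propsOf n P U).ncard := by
  obtain ⟨f, hf, hfProp⟩ := S.exists_injOn_mem_of_forall_ncard_le (fun x => propsOf n Ps {x})
    fun U hU => (biUnion_propsOf_singleton U).symm ▸ hS U hU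
  refine ⟨f '' S, ?_, hf.ncard_image, fun U hU => ?_⟩
  · rintro _ ⟨x, hx, rfl⟩
    exact propsOf_mono_s6 (singleton_subset_iff.mpr hx) (hfProp x hx)
  · have hfU : f '' U ⊆ propsOf n (f '' S) U := by
      rintro _ ⟨x, hx, rfl⟩
      exact ⟨mem_image_of_mem f (hU hx), x, (mem_propsOf_singleton.mp (hfProp x (hU hx))).2, hx⟩
    calc U.ncard = (f '' U).ncard := ((hf.mono hU).ncard_image).symm
      _ ≤ (propsOf n (f '' S) U).ncard := ncard_le_ncard hfU
end

section
/- Let W = (𝒫, n) be a well-defined Wilson loop diagram and let M be its matroid M(W). If C ⊆ Fin n is a circuit of M, then rk(C) = |Prop(C)|; equivalently, |C| = |Prop(C)| + 1. -/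
open Matroid Set

/-- A circuit of a matroid: a minimal dependent set. -/
def Matroid.IsCircuitOf {α : Type*} (M : Matroid α) (C : Set α) : Prop :=
  M.Dep C ∧ ∀ D ⊂ C, ¬ M.Dep D

/-- A union of circuits (a cyclic set) of a matroid. -/
def Matroid.UnionOfCircuits {α : Type*} (M : Matroid α) (C : Set α) : Prop :=
  ∃ 𝒞 : Set (Set α), (∀ D ∈ 𝒞, M.IsCircuitOf D) ∧ C = ⋃₀ 𝒞

/-- A matroid is connected if its ground set is nonempty and any two elements of the
ground set are equal or lie on a common circuit. -/
def Matroid.Conn {α : Type*} (M : Matroid α) : Prop :=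
  M.E.Nonempty ∧ ∀ x ∈ M.E, ∀ y ∈ M.E, x = y ∨ ∃ C, M.IsCircuitOf C ∧ x ∈ C ∧ y ∈ C

/-- The rank of a set in a matroid: the maximal size of an independent subset. -/
noncomputable def Matroid.rk' {α : Type*} (M : Matroid α) (X : Set α) : ℕ :=
  sSup (Set.ncard '' {I | M.Indep I ∧ I ⊆ X})

/-- Contraction of a matroid by a set, defined via duality. -/
def Matroid.contractBy {α : Type*} (M : Matroid α) (C : Set α) : Matroid α :=
  (M✶ ↾ (M.E \ C))✶

/-- The propagator flat `F(P)`: vertices supporting only propagators in `P`. -/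
def FP (n : ℕ) [NeZero n] (Ps P : Set (Fin n × Fin n)) : Set (Fin n) :=
  VP n P \ VP n (Ps \ P)

/-- In the matroid `M(W)` of a well-defined Wilson loop diagram, any
circuit `C` satisfies `rk C = |Prop(C)|`, equivalently `|C| = |Prop(C)| + 1`. -/
theorem circuit_rank_eq_card_props (n : ℕ) [NeZero n]
    (Ps : Set (Fin n × Fin n)) (hW : WellDefinedWLD n Ps)
    (M : Matroid (Fin n)) (hME : M.E = Set.univ)
    (hMI : ∀ S : Set (Fin n), M.Indep S ↔ ∀ U ⊆ S, U.ncard ≤ (propsOf n Ps U).ncard)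
    (C : Set (Fin n)) (hC : M.IsCircuitOf C) :
    M.rk' C = (propsOf n Ps C).ncard ∧ C.ncard = (propsOf n Ps C).ncard + 1 := by

  -- Dep D ↔ ¬Indep D for all D (ground set is univ)
  have hdep : ∀ D : Set (Fin n), M.Dep D ↔ ¬ M.Indep D := by
    intro D
    constructor
    · exact fun h => h.1
    · intro h; exact ⟨h, by rw [hME]; exact subset_univ D⟩
  have hCdep := hC.1
  have hCnotindep : ¬ M.Indep C := (hdep C).mp hCdep
  -- proper subsets of C are independent
  have hindep : ∀ D ⊂ C, M.Indep D := by
    intro D hD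
    by_contra h
    exact hC.2 D hD ((hdep D).mpr h)
  -- there is U ⊆ C with |Prop U| < |U|; it must be C itself
  have hlt : (propsOf n Ps C).ncard < C.ncard := by
    rw [hMI] at hCnotindep
    push_neg at hCnotindep
    obtain ⟨U, hUC, hU⟩ := hCnotindep
    rcases eq_or_ne U C with rfl | hne
    · exact hU
    · exact absurd (((hMI U).mp (hindep U ⟨hUC, fun h => hne (subset_antisymm hUC h)⟩)) U subset_rfl) (not_le.mpr hU)
  have hCne : C.Nonempty := by
    rw [Set.nonempty_iff_ne_empty]
    rintro rfl
    simp at hlt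
  obtain ⟨x, hx⟩ := hCne
  have hDsub : C \ {x} ⊂ C := Set.sdiff_singleton_ssubset.mpr hx
  have hDindep := hindep _ hDsub
  have hmono : propsOf n Ps (C \ {x}) ⊆ propsOf n Ps C := by
    rintro p ⟨hp, y, hy1, hy2⟩
    exact ⟨hp, y, hy1, hy2.1⟩
  have hDcard : (C \ {x}).ncard + 1 = C.ncard := Set.ncard_diff_singleton_add_one hx
  have hkey : (C \ {x}).ncard ≤ (propsOf n Ps C).ncard :=
    le_trans ((hMI _).mp hDindep _ subset_rfl) (Set.ncard_le_ncard hmono (Set.toFinite _))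
  have heq : C.ncard = (propsOf n Ps C).ncard + 1 := by omega
  refine ⟨?_, heq⟩
  -- rank computation
  have hmem : (propsOf n Ps C).ncard ∈ Set.ncard '' {I | M.Indep I ∧ I ⊆ C} := by
    refine ⟨C \ {x}, ⟨hDindep, hDsub.subset⟩, ?_⟩
    omega
  have hub : ∀ m ∈ Set.ncard '' {I | M.Indep I ∧ I ⊆ C}, m ≤ (propsOf n Ps C).ncard := by
    rintro m ⟨I, ⟨hI, hIC⟩, rfl⟩
    have hIne : I ≠ C := fun h => hCnotindep (h ▸ hI)
    have : I.ncard < C.ncard := Set.ncard_lt_ncard ⟨hIC, fun h => hIne (subset_antisymm hIC h)⟩ (Set.toFinite _)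
    omega
  exact le_antisymm (csSup_le ⟨_, hmem⟩ hub) (le_csSup ⟨_, hub⟩ hmem)
end

section
/- Let M be a matroid on a finite ground set E and let F ⊆ E with |F| ≥ 2 and |E ∖ F| ≥ 2. If the restriction M|F is connected and the contraction M/F is connected, then F is a cyclic flat of M; that is, F is a flat of M and F is a union of circuits of M. -/
/-!
A connected matroid with at least two elements has no loops, and each of its elements lies on a
circuit. The loops of `M / F` are exactly `cl(F) \ F`, so connectedness of `M / F` forces `F` to
be closed; the circuits of `M ↾ F` are the circuits of `M` inside `F`, so connectedness of `M ↾ F`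
makes `F` a union of circuits.
-/

open Matroid Set

namespace Matroid

variable {α : Type*} {M : Matroid α} {C F X : Set α} {e : α}

lemma isCircuitOf_iff_isCircuit : M.IsCircuitOf C ↔ M.IsCircuit C := by
  rw [isCircuit_def, minimal_iff_forall_ssubset]
  rfl

lemma contractBy_eq_contract (M : Matroid α) (F : Set α) : M.contractBy F = M ／ F := rfl

lemma unionOfCircuits_iff_forall_mem :
    M.UnionOfCircuits X ↔ ∀ e ∈ X, ∃ C ⊆ X, M.IsCircuit C ∧ e ∈ C := by
  simp_rw [UnionOfCircuits, isCircuitOf_iff_isCircuit]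
  constructor
  · rintro ⟨𝒞, h𝒞, rfl⟩ e ⟨C, hC𝒞, heC⟩
    exact ⟨C, subset_sUnion_of_mem hC𝒞, h𝒞 C hC𝒞, heC⟩
  · refine fun h ↦ ⟨{C | M.IsCircuit C ∧ C ⊆ X}, fun C hC ↦ hC.1, ?_⟩
    refine subset_antisymm (fun e he ↦ ?_) (sUnion_subset fun C hC ↦ hC.2)
    obtain ⟨C, hCX, hC, heC⟩ := h e he
    exact ⟨C, ⟨hC, hCX⟩, heC⟩

lemma Conn.exists_isCircuit_nontrivial_mem (hM : M.Conn) (hE : 1 < M.E.ncard) (he : e ∈ M.E) :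
    ∃ C, M.IsCircuit C ∧ C.Nontrivial ∧ e ∈ C := by
  obtain ⟨f, hf, hfe⟩ := exists_ne_of_one_lt_ncard hE e
  obtain rfl | ⟨C, hC, heC, hfC⟩ := hM.2 e he f hf
  · exact absurd rfl hfe
  exact ⟨C, isCircuitOf_iff_isCircuit.1 hC, ⟨e, heC, f, hfC, hfe.symm⟩, heC⟩

lemma Conn.loopless (hM : M.Conn) (hE : 1 < M.E.ncard) : M.Loopless := by
  refine loopless_iff_forall_not_isLoop.2 fun e he hloop ↦ ?_
  obtain ⟨C, hC, hCnt, heC⟩ := hM.exists_isCircuit_nontrivial_mem hE he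
  rw [hloop.eq_of_isCircuit_mem hC heC] at hCnt
  exact not_nontrivial_singleton hCnt

lemma isFlat_of_loopless_contract (hF : F ⊆ M.E) (h : (M ／ F).Loopless) : M.IsFlat F := by
  have hloops := (M ／ F).loops_eq_empty
  rw [contract_loops_eq, sdiff_eq_empty] at hloops
  exact isFlat_iff_closure_eq.2 (hloops.antisymm (M.subset_closure F hF))

lemma unionOfCircuits_of_conn_restrict (hF : F ⊆ M.E) (hres : (M ↾ F).Conn)
    (hcard : 1 < F.ncard) : M.UnionOfCircuits F := by
  refine unionOfCircuits_iff_forall_mem.2 fun e he ↦ ?_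
  obtain ⟨C, hC, -, heC⟩ := hres.exists_isCircuit_nontrivial_mem hcard he
  rw [restrict_isCircuit_iff hF] at hC
  exact ⟨C, hC.2, hC.1, heC⟩

end Matroid

theorem flacet_is_cyclic_flat_general {α : Type*} (M : Matroid α)
    (F : Set α) (hFE : F ⊆ M.E) (h2 : 2 ≤ F.ncard) (h2c : 2 ≤ (M.E \ F).ncard)
    (hres : (M ↾ F).Conn) (hcon : (M.contractBy F).Conn) :
    M.IsFlat F ∧ M.UnionOfCircuits F := by
  rw [contractBy_eq_contract] at hcon
  exact ⟨isFlat_of_loopless_contract hFE (hcon.loopless h2c),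
    unionOfCircuits_of_conn_restrict hFE hres h2⟩

/-- If `F ⊆ M.E` with `|F| ≥ 2` and `|M.E \ F| ≥ 2`, and both the
restriction `M ↾ F` and the contraction `M / F` are connected, then `F` is a cyclic flat
of `M`: a flat that is a union of circuits. -/
theorem flacet_is_cyclic_flat {α : Type*} (M : Matroid α) (hfin : M.E.Finite)
    (F : Set α) (hFE : F ⊆ M.E) (h2 : 2 ≤ F.ncard) (h2c : 2 ≤ (M.E \ F).ncard)
    (hres : (M ↾ F).Conn) (hcon : (M.contractBy F).Conn) :
    M.IsFlat F ∧ M.UnionOfCircuits F :=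
  flacet_is_cyclic_flat_general M F hFE h2 h2c hres hcon
end
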